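/- Let F be a C⁰-Finsler structure on U and G_ε its local vertical smoothing. Then G_ε converges to F uniformly on compact subsets of TU ≅ U × ℝⁿ as ε → 0. -/
import Mathlib
set_option maxHeartbeats 1000000


open MeasureTheory

/-- The standard mollifier on ℝⁿ. -/
noncomputable def eta {n : ℕ} (C : ℝ) (x : EuclideanSpace ℝ (Fin n)) : ℝ :=
  if ‖x‖ < 1 then C * Real.exp (1 / (‖x‖ ^ 2 - 1)) else 0

/-- The rescaled mollifier `η_ε(x) = ε^{-n} η(x/ε)`. -/
noncomputable def etaE {n : ℕ} (C ε : ℝ) (x : EuclideanSpace ℝ (Fin n)) : ℝ :=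
  (1 / ε ^ n) * eta C (ε⁻¹ • x)

/-- The vertical convolution `(ζ_ε ∗_v F)(x,y) = ∫ ζ_ε(z) F(x, y−z) dz` with
`ζ_ε = (1−u(ε))η_ε + u(ε)η_{2r_U/r_u}`. -/
noncomputable def vconv {n : ℕ} (C : ℝ) (u : ℝ → ℝ) (rU ru ε : ℝ)
    (F : EuclideanSpace ℝ (Fin n) → EuclideanSpace ℝ (Fin n) → ℝ)
    (x y : EuclideanSpace ℝ (Fin n)) : ℝ :=
  ∫ z, ((1 - u ε) * etaE C ε z + u ε * etaE C (2 * rU / ru) z) * F x (y - z)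

section Aux

variable {n : ℕ}

lemma eta_eq (C : ℝ) (x : EuclideanSpace ℝ (Fin n)) :
    eta C x = C * expNegInvGlue (1 - ‖x‖ ^ 2) := by
  unfold eta expNegInvGlue
  rcases lt_or_ge ‖x‖ 1 with h | h
  · have h2 : ¬(1 - ‖x‖ ^ 2 ≤ 0) := by push_neg; nlinarith [norm_nonneg x]
    rw [if_pos h, if_neg h2]
    congr 1
    rw [one_div, show ‖x‖ ^ 2 - 1 = -(1 - ‖x‖ ^ 2) by ring, inv_neg]
  · have h2 : 1 - ‖x‖ ^ 2 ≤ 0 := by nlinarith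
    rw [if_neg (not_lt.2 h), if_pos h2, mul_zero]

lemma eta_continuous (C : ℝ) : Continuous (eta (n := n) C) := by
  have : (eta (n := n) C) = fun x => C * expNegInvGlue (1 - ‖x‖ ^ 2) := by
    funext x; exact eta_eq C x
  rw [this]
  exact continuous_const.mul ((expNegInvGlue.contDiff (n := 0)).continuous.comp
    (continuous_const.sub ((continuous_norm).pow 2)))

lemma eta_nonneg {C : ℝ} (hC : 0 ≤ C) (x : EuclideanSpace ℝ (Fin n)) : 0 ≤ eta C x := by
  rw [eta_eq]
  exact mul_nonneg hC (expNegInvGlue.nonneg _)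

lemma eta_zero_of_le {C : ℝ} {x : EuclideanSpace ℝ (Fin n)} (h : 1 ≤ ‖x‖) : eta C x = 0 :=
  if_neg (not_lt.2 h)

lemma etaE_continuous (C s : ℝ) : Continuous (etaE (n := n) C s) :=
  continuous_const.mul ((eta_continuous C).comp (continuous_const_smul _))

lemma etaE_nonneg {C : ℝ} (hC : 0 ≤ C) {s : ℝ} (hs : 0 < s) (x : EuclideanSpace ℝ (Fin n)) :
    0 ≤ etaE C s x :=
  mul_nonneg (by positivity) (eta_nonneg hC _)

lemma etaE_zero_of_le {C s : ℝ} (hs : 0 < s) {x : EuclideanSpace ℝ (Fin n)}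
    (h : s ≤ ‖x‖) : etaE C s x = 0 := by
  unfold etaE
  rw [eta_zero_of_le, mul_zero]
  rw [norm_smul, Real.norm_eq_abs, abs_of_nonneg (inv_nonneg.2 hs.le), inv_mul_eq_div]
  exact (one_le_div hs).2 h

lemma etaE_hasCompactSupport {C s : ℝ} (hs : 0 < s) :
    HasCompactSupport (etaE (n := n) C s) := by
  apply HasCompactSupport.intro (K := Metric.closedBall 0 s) (isCompact_closedBall _ _)
  intro x hx
  apply etaE_zero_of_le hs
  simp only [Metric.mem_closedBall, dist_zero_right, not_le] at hx
  exact hx.le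

lemma etaE_integrable {C s : ℝ} (hs : 0 < s) :
    Integrable (etaE (n := n) C s) :=
  (etaE_continuous C s).integrable_of_hasCompactSupport (etaE_hasCompactSupport hs)

lemma etaE_integral (C : ℝ) {s : ℝ} (hs : 0 < s)
    (hnorm : (∫ x : EuclideanSpace ℝ (Fin n), eta C x) = 1) :
    (∫ x : EuclideanSpace ℝ (Fin n), etaE C s x) = 1 := by
  unfold etaE
  rw [integral_const_mul,
    Measure.integral_comp_inv_smul_of_nonneg volume (eta C) hs.le, hnorm,
    finrank_euclideanSpace_fin, smul_eq_mul, mul_one]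
  field_simp

end Aux

/-- Key estimate : the vertical convolution is uniformly close to `F`. -/
lemma vconv_close {n : ℕ} (C : ℝ) (hC : 0 < C)
    (hnorm : (∫ x : EuclideanSpace ℝ (Fin n), eta C x) = 1)
    (u : ℝ → ℝ) (rU ru ε : ℝ) (hε : 0 < ε) (hR : 0 < 2 * rU / ru)
    (hu0 : 0 ≤ u ε) (hu1 : u ε ≤ 1) (hrU0 : 0 ≤ rU)
    (F : EuclideanSpace ℝ (Fin n) → EuclideanSpace ℝ (Fin n) → ℝ)
    (hFc : Continuous fun p : EuclideanSpace ℝ (Fin n) × EuclideanSpace ℝ (Fin n) =>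
      F p.1 p.2)
    (x w : EuclideanSpace ℝ (Fin n))
    (hlip : ∀ a b, |F x a - F x b| ≤ rU * ‖a - b‖) :
    |vconv C u rU ru ε F x w - F x w| ≤ rU * ε + u ε * (rU * (2 * rU / ru)) := by
  set R : ℝ := 2 * rU / ru with hRdef
  set ζ : EuclideanSpace ℝ (Fin n) → ℝ :=
    fun z => (1 - u ε) * etaE C ε z + u ε * etaE C R z with hζ
  have hζc : Continuous ζ :=
    (continuous_const.mul (etaE_continuous C ε)).add
      (continuous_const.mul (etaE_continuous C R))
  have hζcs : HasCompactSupport ζ := by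
    apply HasCompactSupport.add
    · exact ((etaE_hasCompactSupport (C := C) hε).mul_left)
    · exact ((etaE_hasCompactSupport (C := C) hR).mul_left)
  have hζint : Integrable ζ :=
    ((etaE_integrable hε).const_mul _).add ((etaE_integrable hR).const_mul _)
  have hζ1 : (∫ z, ζ z) = 1 := by
    rw [hζ, integral_add ((etaE_integrable hε).const_mul _)
      ((etaE_integrable hR).const_mul _), integral_const_mul, integral_const_mul,
      etaE_integral C hε hnorm, etaE_integral C hR hnorm]
    ring
  have hζnn : ∀ z, 0 ≤ ζ z := fun z =>
    add_nonneg (mul_nonneg (by linarith) (etaE_nonneg hC.le hε z))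
      (mul_nonneg hu0 (etaE_nonneg hC.le hR z))
  -- the integrand of vconv
  have hFz : Continuous fun z : EuclideanSpace ℝ (Fin n) => F x (w - z) :=
    hFc.comp (Continuous.prodMk_right x |>.comp (continuous_const.sub continuous_id)) |>.congr
      (fun z => rfl)
  have hgint : Integrable (fun z => ζ z * F x (w - z)) := by
    apply (hζc.mul hFz).integrable_of_hasCompactSupport
    exact hζcs.mul_right
  have hcint : Integrable (fun z => ζ z * F x w) := hζint.mul_const _
  have hdiff : vconv C u rU ru ε F x w - F x w
      = ∫ z, ζ z * (F x (w - z) - F x w) := by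
    have h1 : (∫ z, ζ z * (F x (w - z) - F x w))
        = (∫ z, ζ z * F x (w - z)) - ∫ z, ζ z * F x w := by
      rw [← integral_sub hgint hcint]
      congr 1; funext z; ring
    rw [h1, integral_mul_const, hζ1, one_mul]
    rfl
  -- the dominating function
  set h : EuclideanSpace ℝ (Fin n) → ℝ :=
    fun z => ((1 - u ε) * (rU * ε)) * etaE C ε z + (u ε * (rU * R)) * etaE C R z with hh
  have hhint : Integrable h :=
    ((etaE_integrable hε).const_mul _).add ((etaE_integrable hR).const_mul _)
  have hhval : (∫ z, h z) = (1 - u ε) * (rU * ε) + u ε * (rU * R) := by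
    rw [hh, integral_add ((etaE_integrable hε).const_mul _)
      ((etaE_integrable hR).const_mul _), integral_const_mul, integral_const_mul,
      etaE_integral C hε hnorm, etaE_integral C hR hnorm, mul_one, mul_one]
  have hptwise : ∀ z, ‖ζ z * (F x (w - z) - F x w)‖ ≤ h z := by
    intro z
    rw [Real.norm_eq_abs, abs_mul, abs_of_nonneg (hζnn z)]
    have habs : |F x (w - z) - F x w| ≤ rU * ‖z‖ := by
      have := hlip (w - z) w
      simpa [norm_sub_rev] using this
    have habs0 : 0 ≤ |F x (w - z) - F x w| := abs_nonneg _
    have key1 : etaE C ε z * |F x (w - z) - F x w| ≤ etaE C ε z * (rU * ε) := by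
      rcases lt_or_ge ‖z‖ ε with hz | hz
      · apply mul_le_mul_of_nonneg_left _ (etaE_nonneg hC.le hε z)
        calc |F x (w - z) - F x w| ≤ rU * ‖z‖ := habs
          _ ≤ rU * ε := by nlinarith [norm_nonneg z]
      · rw [etaE_zero_of_le hε hz, zero_mul, zero_mul]
    have key2 : etaE C R z * |F x (w - z) - F x w| ≤ etaE C R z * (rU * R) := by
      rcases lt_or_ge ‖z‖ R with hz | hz
      · apply mul_le_mul_of_nonneg_left _ (etaE_nonneg hC.le hR z)
        calc |F x (w - z) - F x w| ≤ rU * ‖z‖ := habs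
          _ ≤ rU * R := by nlinarith [norm_nonneg z]
      · rw [etaE_zero_of_le hR hz, zero_mul, zero_mul]
    have h1u : (0:ℝ) ≤ 1 - u ε := by linarith
    calc ζ z * |F x (w - z) - F x w|
        = (1 - u ε) * (etaE C ε z * |F x (w - z) - F x w|)
          + u ε * (etaE C R z * |F x (w - z) - F x w|) := by rw [hζ]; ring
      _ ≤ (1 - u ε) * (etaE C ε z * (rU * ε)) + u ε * (etaE C R z * (rU * R)) := by
          gcongr
      _ = h z := by rw [hh]; ring
  have hnorm_le : ‖∫ z, ζ z * (F x (w - z) - F x w)‖ ≤ ∫ z, h z := by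
    apply norm_integral_le_of_norm_le hhint
    filter_upwards with z using hptwise z
  rw [hdiff, ← Real.norm_eq_abs]
  refine hnorm_le.trans ?_
  rw [hhval]
  have : (1 - u ε) * (rU * ε) ≤ rU * ε := by nlinarith [mul_nonneg hrU0 hε.le]
  linarith

/-- Let `F` be a C⁰-Finsler structure on `U` (in a chart) and `G_ε` its local vertical
smoothing: `G_ε(x,·)` is the asymmetric norm whose sphere of radius `r_U` is
`(ζ_ε ∗_v F)⁻¹(r_U) ∩ T_xU`, contained in the annulus `1/2 ≤ ‖y‖ ≤ 2r_U/r_u`. Then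
`G_ε → F` uniformly on compact subsets of `TU ≅ U × ℝⁿ` as `ε → 0`. -/
theorem vertical_smoothing_uniform_convergence {n : ℕ} (C : ℝ) (hC : 0 < C)
    (hnorm : (∫ x : EuclideanSpace ℝ (Fin n), eta C x) = 1)
    (U : Set (EuclideanSpace ℝ (Fin n))) (hUo : IsOpen U)
    (hUc : IsCompact (closure U))
    (F : EuclideanSpace ℝ (Fin n) → EuclideanSpace ℝ (Fin n) → ℝ)
    (hFc : Continuous fun p : EuclideanSpace ℝ (Fin n) × EuclideanSpace ℝ (Fin n) =>
      F p.1 p.2)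
    (hnn : ∀ x ∈ closure U, ∀ y, 0 ≤ F x y)
    (hzero : ∀ x ∈ closure U, ∀ y, F x y = 0 → y = 0)
    (hFhom : ∀ x ∈ closure U, ∀ (μ : ℝ) y, 0 ≤ μ → F x (μ • y) = μ * F x y)
    (hsub : ∀ x ∈ closure U, ∀ y z, F x (y + z) ≤ F x y + F x z)
    (rU ru : ℝ)
    (hrU : IsGreatest {c | ∃ x ∈ closure U, ∃ y : EuclideanSpace ℝ (Fin n),
      ‖y‖ = 1 ∧ F x y = c} rU)
    (hru : IsLeast {c | ∃ x ∈ closure U, ∃ y : EuclideanSpace ℝ (Fin n),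
      ‖y‖ = 1 ∧ F x y = c} ru)
    (u : ℝ → ℝ) (τ : ℝ) (hτ : 0 < τ)
    (hu : ∀ ε ∈ Set.Ioo (0 : ℝ) τ, 0 < u ε ∧ u ε < ru / (16 * n * rU))
    (hu0 : Filter.Tendsto u (nhdsWithin 0 (Set.Ioi 0)) (nhds 0))
    (G : ℝ → EuclideanSpace ℝ (Fin n) → EuclideanSpace ℝ (Fin n) → ℝ)
    (hGhom : ∀ ε ∈ Set.Ioo (0 : ℝ) τ, ∀ x ∈ U, ∀ (μ : ℝ) y, 0 ≤ μ →
      G ε x (μ • y) = μ * G ε x y)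
    (hGpos : ∀ ε ∈ Set.Ioo (0 : ℝ) τ, ∀ x ∈ U, ∀ y, y ≠ 0 → 0 < G ε x y)
    (hGsphere : ∀ ε ∈ Set.Ioo (0 : ℝ) τ, ∀ x ∈ U, ∀ y, G ε x y = rU →
      vconv C u rU ru ε F x y = rU ∧ 1 / 2 ≤ ‖y‖ ∧ ‖y‖ ≤ 2 * rU / ru)
    (K : Set (EuclideanSpace ℝ (Fin n) × EuclideanSpace ℝ (Fin n)))
    (hK : IsCompact K) (hKU : K ⊆ U ×ˢ Set.univ)
    (δ : ℝ) (hδ : 0 < δ) :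
    ∃ β ∈ Set.Ioc (0 : ℝ) τ, ∀ ε ∈ Set.Ioo (0 : ℝ) β, ∀ p ∈ K,
      |G ε p.1 p.2 - F p.1 p.2| < δ := by
  classical
  obtain ⟨⟨x₀, hx₀, y₀, hy₀, hFy₀⟩, hub⟩ := hrU
  obtain ⟨⟨x₁, hx₁, y₁, hy₁, hFy₁⟩, hlb⟩ := hru
  have hy₀0 : y₀ ≠ 0 := by intro h; rw [h] at hy₀; simp at hy₀
  have hy₁0 : y₁ ≠ 0 := by intro h; rw [h] at hy₁; simp at hy₁
  have hrUpos : 0 < rU := by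
    rcases (hnn x₀ hx₀ y₀).lt_or_eq with h | h
    · rwa [hFy₀] at h
    · exact absurd (hzero x₀ hx₀ y₀ h.symm) hy₀0
  have hrupos : 0 < ru := by
    rcases (hnn x₁ hx₁ y₁).lt_or_eq with h | h
    · rwa [hFy₁] at h
    · exact absurd (hzero x₁ hx₁ y₁ h.symm) hy₁0
  have hR : 0 < 2 * rU / ru := by positivity
  set R : ℝ := 2 * rU / ru with hRdef
  have hruU : ru ≤ rU := hub ⟨x₁, hx₁, y₁, hy₁, hFy₁⟩
  -- the upper bound F x y ≤ rU ‖y‖ and the Lipschitz estimate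
  have hF0 : ∀ x ∈ closure U, F x 0 = 0 := by
    intro x hx
    have := hFhom x hx 0 0 le_rfl
    simpa using this
  have hFub : ∀ x ∈ closure U, ∀ y, F x y ≤ rU * ‖y‖ := by
    intro x hx y
    rcases eq_or_ne y 0 with rfl | hy
    · simp [hF0 x hx]
    · have hny : 0 < ‖y‖ := norm_pos_iff.2 hy
      have h1 : y = ‖y‖ • (‖y‖⁻¹ • y) := by
        rw [smul_smul, mul_inv_cancel₀ hny.ne', one_smul]
      have h2 : ‖(‖y‖⁻¹ • y)‖ = 1 := by
        rw [norm_smul, Real.norm_eq_abs, abs_of_nonneg (inv_nonneg.2 hny.le),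
          inv_mul_cancel₀ hny.ne']
      have h3 : F x (‖y‖⁻¹ • y) ≤ rU := hub ⟨x, hx, _, h2, rfl⟩
      calc F x y = ‖y‖ * F x (‖y‖⁻¹ • y) := by rw [← hFhom x hx _ _ hny.le, ← h1]
        _ ≤ ‖y‖ * rU := by nlinarith
        _ = rU * ‖y‖ := mul_comm _ _
  have hFlip : ∀ x ∈ closure U, ∀ a b, |F x a - F x b| ≤ rU * ‖a - b‖ := by
    intro x hx a b
    rw [abs_le]
    constructor
    · have h1 : F x b ≤ F x a + F x (b - a) := by
        have := hsub x hx a (b - a); simpa using this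
      have h2 : F x (b - a) ≤ rU * ‖b - a‖ := hFub x hx _
      rw [norm_sub_rev a b]
      linarith
    · have h1 : F x a ≤ F x b + F x (a - b) := by
        have := hsub x hx b (a - b); simpa using this
      have h2 : F x (a - b) ≤ rU * ‖a - b‖ := hFub x hx _
      linarith
  -- u ε < 1 on (0, τ)
  have hn1 : 1 ≤ (n : ℝ) := by
    have : n ≠ 0 := by
      intro h
      subst h
      exact hy₀0 (Subsingleton.elim y₀ 0)
    exact_mod_cast Nat.one_le_iff_ne_zero.2 this
  have hu1 : ∀ ε ∈ Set.Ioo (0 : ℝ) τ, u ε ≤ 1 := by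
    intro ε hε
    have h1 := (hu ε hε).2
    have h2 : ru / (16 * n * rU) ≤ 1 := by
      rw [div_le_one (by positivity)]
      nlinarith
    linarith
  -- bound on the compact set K
  have hbdd : BddAbove ((fun p : EuclideanSpace ℝ (Fin n) × EuclideanSpace ℝ (Fin n)
      => ‖p.2‖) '' K) :=
    (hK.image (continuous_norm.comp continuous_snd)).bddAbove
  obtain ⟨M, hM⟩ := hbdd
  have hMb : ∀ p ∈ K, ‖p.2‖ ≤ M := fun p hp => hM ⟨p, hp, rfl⟩
  set M' : ℝ := max M 0 + 1 with hM'def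
  have hM'pos : 0 < M' := by positivity
  have hM'b : ∀ p ∈ K, ‖p.2‖ ≤ M' := fun p hp =>
    (hMb p hp).trans (by simp [hM'def]; linarith [le_max_left M 0])
  -- choose β
  set c₁ : ℝ := δ / (4 * M' * (rU * R)) with hc₁def
  have hc₁pos : 0 < c₁ := by positivity
  set c₂ : ℝ := δ / (4 * M' * rU) with hc₂def
  have hc₂pos : 0 < c₂ := by positivity
  have hev : ∀ᶠ ε in nhdsWithin 0 (Set.Ioi 0), u ε < c₁ :=
    hu0.eventually_lt_const hc₁pos
  rw [Filter.eventually_iff, Metric.mem_nhdsWithin_iff] at hev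
  obtain ⟨β₁, hβ₁pos, hβ₁⟩ := hev
  set β : ℝ := min τ (min β₁ c₂) with hβdef
  have hβpos : 0 < β := lt_min hτ (lt_min hβ₁pos hc₂pos)
  refine ⟨β, ⟨hβpos, min_le_left _ _⟩, ?_⟩
  intro ε hε p hp
  have hετ : ε ∈ Set.Ioo (0 : ℝ) τ :=
    ⟨hε.1, hε.2.trans_le (min_le_left _ _)⟩
  have hεβ₁ : ε < β₁ := hε.2.trans_le ((min_le_right _ _).trans (min_le_left _ _))
  have hεc₂ : ε < c₂ := hε.2.trans_le ((min_le_right _ _).trans (min_le_right _ _))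
  have huε : u ε < c₁ := by
    apply hβ₁
    constructor
    · simp [Real.dist_eq, abs_of_pos hε.1, hεβ₁]
    · exact hε.1
  have huεpos : 0 < u ε := (hu ε hετ).1
  obtain ⟨x, y⟩ := p
  have hxU : x ∈ U := (hKU hp).1
  have hxc : x ∈ closure U := subset_closure hxU
  rcases eq_or_ne y 0 with rfl | hy
  · have hG0 : G ε x 0 = 0 := by
      have := hGhom ε hετ x hxU 0 0 le_rfl
      simpa using this
    simpa [hG0, hF0 x hxc] using hδ
  · have hny : 0 < ‖y‖ := norm_pos_iff.2 hy
    set g : ℝ := G ε x y with hgdef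
    have hgpos : 0 < g := hGpos ε hετ x hxU y hy
    set μ : ℝ := rU / g with hμdef
    have hμpos : 0 < μ := by positivity
    set w : EuclideanSpace ℝ (Fin n) := μ • y with hwdef
    have hGw : G ε x w = rU := by
      rw [hwdef, hGhom ε hετ x hxU μ y hμpos.le, hμdef, div_mul_cancel₀ _ hgpos.ne']
    obtain ⟨hvconv, hwlb, _⟩ := hGsphere ε hετ x hxU w hGw
    -- key estimate
    have hkey : |vconv C u rU ru ε F x w - F x w| ≤ rU * ε + u ε * (rU * R) :=
      vconv_close C hC hnorm u rU ru ε hε.1 hR huεpos.le (hu1 ε hετ) hrUpos.le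
        F hFc x w (hFlip x hxc)
    rw [hvconv] at hkey
    have hFw : F x w = μ * F x y := hFhom x hxc μ y hμpos.le
    have hμg : rU = μ * g := by rw [hμdef, div_mul_cancel₀ _ hgpos.ne']
    have hmain : μ * |g - F x y| ≤ rU * ε + u ε * (rU * R) := by
      have : |rU - F x w| = μ * |g - F x y| := by
        rw [hFw, hμg, ← mul_sub, abs_mul, abs_of_pos hμpos]
      rwa [this] at hkey
    -- bound μ from below
    have hwn : ‖w‖ = μ * ‖y‖ := by
      rw [hwdef, norm_smul, Real.norm_eq_abs, abs_of_pos hμpos]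
    have hμlb : 1 ≤ 2 * ‖y‖ * μ := by
      have h1 : (1:ℝ) / 2 ≤ μ * ‖y‖ := by rw [← hwn]; exact hwlb
      have h2 : μ * ‖y‖ = ‖y‖ * μ := mul_comm _ _
      linarith
    have hyM : ‖y‖ ≤ M' := hM'b (x, y) hp
    -- final chain
    have hbound : rU * ε + u ε * (rU * R) < δ / (2 * M') := by
      have h1 : rU * ε < δ / (4 * M') := by
        have : rU * ε < rU * c₂ := mul_lt_mul_of_pos_left hεc₂ hrUpos
        rw [hc₂def] at this
        calc rU * ε < rU * (δ / (4 * M' * rU)) := this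
          _ = δ / (4 * M') := by field_simp
      have h2 : u ε * (rU * R) < δ / (4 * M') := by
        have : u ε * (rU * R) < c₁ * (rU * R) := mul_lt_mul_of_pos_right huε (mul_pos hrUpos hR)
        rw [hc₁def] at this
        calc u ε * (rU * R) < δ / (4 * M' * (rU * R)) * (rU * R) := this
          _ = δ / (4 * M') := by field_simp
      have : δ / (4 * M') + δ / (4 * M') = δ / (2 * M') := by field_simp; ring
      linarith
    have habs0 : 0 ≤ |g - F x y| := abs_nonneg _
    calc |g - F x y| ≤ 2 * ‖y‖ * μ * |g - F x y| := le_mul_of_one_le_left habs0 hμlb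
      _ = 2 * ‖y‖ * (μ * |g - F x y|) := by ring
      _ ≤ 2 * ‖y‖ * (rU * ε + u ε * (rU * R)) := by
          have h2y : 0 ≤ 2 * ‖y‖ := by positivity
          exact mul_le_mul_of_nonneg_left hmain h2y
      _ ≤ 2 * M' * (rU * ε + u ε * (rU * R)) := by
          have hb0 : 0 ≤ rU * ε + u ε * (rU * R) :=
            add_nonneg (mul_nonneg hrUpos.le hε.1.le)
              (mul_nonneg huεpos.le (mul_nonneg hrUpos.le hR.le))
          have h2y : 2 * ‖y‖ ≤ 2 * M' := by linarith
          exact mul_le_mul_of_nonneg_right h2y hb0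
      _ < 2 * M' * (δ / (2 * M')) := by
          have : 0 < 2 * M' := by positivity
          exact mul_lt_mul_of_pos_left hbound this
      _ = δ := by field_simp
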